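/- arXiv:1705.05786 — 2 statements merged into one kernel-verified Lean document; each statement's English description precedes it below -/
import Mathlib

section
/- Let A = {a, b} be a two-letter alphabet (a ≠ b), and let τ_a and τ_b be the endomorphisms of A* defined by τ_a(a) = a, τ_a(b) = ab and τ_b(a) = ba, τ_b(b) = b. If w is an infinite LSP word over A and f ∈ {τ_a, τ_b}, then f(w) is LSP. -/
/-- `u` is a prefix of the infinite word `w`. -/
def PrefI {A : Type*} (u : List A) (w : ℕ → A) : Prop :=
  ∀ i (h : i < u.length), u[i] = w i

/-- `u` is a factor of the infinite word `w`. -/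
def FactorI {A : Type*} (w : ℕ → A) (u : List A) : Prop :=
  ∃ k, ∀ i (h : i < u.length), u[i] = w (k + i)

/-- The infinite word `w` is LSP: every left special factor of `w` is a prefix of `w`. -/
def LSPInf {A : Type*} (w : ℕ → A) : Prop :=
  ∀ (u : List A) (a b : A), a ≠ b → FactorI w (a :: u) → FactorI w (b :: u) → PrefI u w

/-- `f` is a bLSP morphism (given by its action on letters). -/
def IsBLSP {A : Type*} (f : A → List A) : Prop :=
  ∃ α, f α = [α] ∧ ∀ β, β ≠ α → ∃ γ, f β = f γ ++ [β]

/-- `v` is the image of the infinite word `w` under the non-erasing morphism `f`,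
i.e. every finite concatenation `f (w 0) ++ ⋯ ++ f (w (n-1))` is a prefix of `v`. -/
def IsImage {A B : Type*} (f : A → List B) (w : ℕ → A) (v : ℕ → B) : Prop :=
  ∀ n, PrefI (((List.range n).map w).flatMap f) v

/-!
Swapping the letters if necessary, `f` is `τ_α : α ↦ α, β ↦ αβ`. In `v = f(w)` a `β`, and an `α`
followed by `α`, always end the image of an occurrence of that same letter in `w`. So if `αu`
and `βu` are factors of `v`, then `u` is read in `v` right after the images of an `α` and of a
`β` of `w`, and decoding `u` gives a word `x` with `αx` and `βx` factors of `w`. Hence `x` is a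
prefix of `w`, and `u`, a prefix of `f(x)α`, is a prefix of `v`.
-/

section Words

variable {A : Type*}

def shift (w : ℕ → A) (k : ℕ) : ℕ → A := fun i => w (k + i)

@[simp] theorem shift_apply (w : ℕ → A) (k i : ℕ) : shift w k i = w (k + i) := rfl

@[simp] theorem shift_zero (w : ℕ → A) : shift w 0 = w :=
  funext fun i => by simp

@[simp] theorem shift_shift (w : ℕ → A) (m n : ℕ) : shift (shift w m) n = shift w (m + n) :=
  funext fun i => by simp [add_assoc]

section Prefixes

variable {u l : List A} {w : ℕ → A}

theorem prefI_iff_map_range_eq : PrefI u w ↔ (List.range u.length).map w = u := by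
  refine ⟨fun h => List.ext_getElem (by simp) fun i _ hi => by simp [h i hi], fun h i hi => ?_⟩
  rw [← List.getElem_of_eq h (by simpa using hi)]
  simp

theorem prefI_map_range (w : ℕ → A) (n : ℕ) : PrefI ((List.range n).map w) w :=
  prefI_iff_map_range_eq.2 (by simp)

theorem PrefI.of_isPrefix (hu : PrefI u w) (hl : l <+: u) : PrefI l w := fun i hi => by
  rw [hl.getElem hi]
  exact hu i _

theorem PrefI.isPrefix (hu : PrefI u w) (hl : PrefI l w) (hlen : u.length ≤ l.length) :
    u <+: l := by
  rw [← prefI_iff_map_range_eq.1 hu, ← prefI_iff_map_range_eq.1 hl, List.prefix_iff_eq_take]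
  simp [← List.map_take, List.take_range, hlen]

theorem prefI_append_iff {l₁ l₂ : List A} :
    PrefI (l₁ ++ l₂) w ↔ PrefI l₁ w ∧ PrefI l₂ (shift w l₁.length) := by
  refine ⟨fun h => ⟨fun i hi => ?_, fun i hi => ?_⟩, fun ⟨h₁, h₂⟩ i hi => ?_⟩
  · rw [← h i (by simp; omega), List.getElem_append_left hi]
  · rw [shift_apply, ← h (l₁.length + i) (by simp; omega), List.getElem_append_right (by omega)]
    simp
  · by_cases hi₁ : i < l₁.length
    · simpa [List.getElem_append_left hi₁] using h₁ i hi₁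
    · have := h₂ (i - l₁.length) (by simp at hi; omega)
      simp only [shift_apply, Nat.add_sub_cancel' (not_lt.1 hi₁)] at this
      simpa [List.getElem_append_right (not_lt.1 hi₁)] using this

@[simp] theorem prefI_nil : PrefI [] w := fun _ h => absurd h (Nat.not_lt_zero _)

theorem prefI_cons_iff {a : A} : PrefI (a :: u) w ↔ w 0 = a ∧ PrefI u (shift w 1) := by
  rw [← List.singleton_append, prefI_append_iff]
  simp [PrefI, eq_comm]

theorem factorI_cons_of_prefI_shift {a : A} {m : ℕ} (hm : w m = a)
    (hu : PrefI u (shift w (m + 1))) : FactorI w (a :: u) :=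
  ⟨m, show PrefI (a :: u) (shift w m) from
    prefI_cons_iff.2 ⟨by simpa using hm, by simpa using hu⟩⟩

end Prefixes

theorem length_le_length_flatMap {B : Type*} {f : A → List B} (hf : ∀ x, f x ≠ [])
    (y : List A) : y.length ≤ (y.flatMap f).length := by
  induction y with
  | nil => simp
  | cons c y ih =>
    have := List.length_pos_iff.2 (hf c)
    simp only [List.flatMap_cons, List.length_append, List.length_cons]
    omega

section Images

variable {B : Type*} {f : A → List B} {w : ℕ → A} {v : ℕ → B}

theorem IsImage.prefI_head (hv : IsImage f w v) : PrefI (f (w 0)) v := by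
  simpa using hv 1

theorem IsImage.shift_head (hv : IsImage f w v) :
    IsImage f (shift w 1) (shift v (f (w 0)).length) := fun n => by
  have h := hv (n + 1)
  rw [List.range_succ_eq_map, List.map_cons, List.flatMap_cons, prefI_append_iff] at h
  convert h.2 using 2
  simp [Function.comp_def, add_comm]

theorem IsImage.exists_block (hf : ∀ x, f x ≠ []) (hv : IsImage f w v) (k : ℕ) :
    ∃ m p j, IsImage f (shift w m) (shift v p) ∧ j < (f (w m)).length ∧ k = p + j := by
  induction k with
  | zero => exact ⟨0, 0, 0, by simpa using hv, List.length_pos_iff.2 (hf _), rfl⟩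
  | succ k ih =>
    obtain ⟨m, p, j, hmp, hj, rfl⟩ := ih
    by_cases hj' : j + 1 < (f (w m)).length
    · exact ⟨m, p, j + 1, hmp, hj', rfl⟩
    · refine ⟨m + 1, p + (f (w m)).length, 0, ?_, List.length_pos_iff.2 (hf _), by omega⟩
      simpa using hmp.shift_head

end Images

section Tau

/-- `f` is the morphism `τ_α` of the two-letter alphabet `{α, β}`. -/
structure IsTau (f : A → List A) (α β : A) : Prop where
  ne : α ≠ β
  eq_or_eq : ∀ x, x = α ∨ x = β
  apply_left : f α = [α]
  apply_right : f β = [α, β]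

variable {α β : A} {f : A → List A} {w v : ℕ → A}

theorem IsTau.ne_nil (hf : IsTau f α β) (x : A) : f x ≠ [] := by
  rcases hf.eq_or_eq x with rfl | rfl <;> simp [hf.apply_left, hf.apply_right]

theorem IsTau.eq_of_cons_isPrefix_flatMap (hf : IsTau f α β) {x : A} {u y : List A}
    (h : x :: u <+: y.flatMap f) : x = α := by
  cases y with
  | nil => simp at h
  | cons c y =>
    rcases hf.eq_or_eq c with rfl | rfl <;>
      simp_all [hf.apply_left, hf.apply_right, List.cons_prefix_cons]

/-- Inverse of `τ_α` on prefixes of its images; a trailing `α`, which may begin either block,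
is dropped. -/
def decode [DecidableEq A] (α β : A) : List A → List A
  | [] => []
  | [_] => []
  | _ :: y :: rest => if y = β then β :: decode α β rest else α :: decode α β (y :: rest)

theorem IsTau.isPrefix_decode [DecidableEq A] (hf : IsTau f α β) {u y : List A}
    (h : u <+: y.flatMap f) : decode α β u <+: y ∧ u <+: (decode α β u).flatMap f ++ [α] := by
  induction u using decode.induct β generalizing y with
  | case1 => simp [decode]
  | case2 x => simp [decode, hf.eq_of_cons_isPrefix_flatMap h]
  | case3 x rest ih =>
    obtain _ | ⟨c, y⟩ := y
    · simp at h
    rcases hf.eq_or_eq c with rfl | rfl <;> simp only [List.flatMap_cons, hf.apply_left,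
      hf.apply_right, List.cons_append, List.nil_append, List.cons_prefix_cons] at h
    · exact absurd (hf.eq_of_cons_isPrefix_flatMap h.2).symm hf.ne
    · obtain ⟨hy, hrest⟩ := ih h.2.2
      simp [decode, hf.apply_right, h.1, hy, hrest]
  | case4 x z rest hz ih =>
    obtain _ | ⟨c, y⟩ := y
    · simp at h
    rcases hf.eq_or_eq c with rfl | rfl <;> simp only [List.flatMap_cons, hf.apply_left,
      hf.apply_right, List.cons_append, List.nil_append, List.cons_prefix_cons] at h
    · obtain ⟨hy, hrest⟩ := ih h.2
      simp [decode, hf.apply_left, hz, h.1, hy, hrest]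
    · exact absurd h.2.1 hz

theorem IsImage.apply_zero (hf : IsTau f α β) (hv : IsImage f w v) : v 0 = α := by
  have h := hv.prefI_head
  rcases hf.eq_or_eq (w 0) with h0 | h0 <;>
    simp_all [hf.apply_left, hf.apply_right, prefI_cons_iff]

theorem IsImage.prefI_decode [DecidableEq A] (hf : IsTau f α β) (hv : IsImage f w v)
    {u : List A} (hu : PrefI u v) :
    PrefI (decode α β u) w ∧ u <+: (decode α β u).flatMap f ++ [α] := by
  set y := (List.range u.length).map w
  have hy : u <+: y.flatMap f :=
    hu.isPrefix (hv _) (by simpa [y] using length_le_length_flatMap hf.ne_nil y)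
  obtain ⟨hdec, hu'⟩ := hf.isPrefix_decode hy
  exact ⟨(prefI_map_range w _).of_isPrefix hdec, hu'⟩

theorem IsImage.prefI_flatMap_append (hf : IsTau f α β) (hv : IsImage f w v) {x : List A}
    (hx : PrefI x w) : PrefI (x.flatMap f ++ [α]) v := by
  have h := hv (x.length + 1)
  rw [List.range_succ, List.map_append, prefI_iff_map_range_eq.1 hx, List.flatMap_append] at h
  refine h.of_isPrefix ((List.prefix_append_right_inj _).2 ?_)
  rcases hf.eq_or_eq (w x.length) with h | h <;> simp [h, hf.apply_left, hf.apply_right]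

theorem IsImage.head_eq_of_prefI_shift (hf : IsTau f α β) (hv : IsImage f w v) {j : ℕ}
    {c : A} {u : List A} (hj : j < (f (w 0)).length) (hc : c = β ∨ ∃ u', u = α :: u')
    (h : PrefI (c :: u) (shift v j)) : w 0 = c ∧ j + 1 = (f (w 0)).length := by
  have hhead := hv.prefI_head
  rcases hf.eq_or_eq (w 0) with h0 | h0 <;> rw [h0] at hhead hj ⊢
  · simp_all [hf.apply_left, prefI_cons_iff]
  · obtain ⟨hv0, hv1⟩ : v 0 = α ∧ v 1 = β := by simp_all [hf.apply_right, prefI_cons_iff]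
    obtain ⟨hvc, hu⟩ := prefI_cons_iff.1 h
    simp only [hf.apply_right, List.length_cons, List.length_nil, shift_apply] at hj hvc ⊢
    obtain _ | _ | j := j
    · refine absurd ?_ hf.ne
      obtain rfl | ⟨u', rfl⟩ := hc
      · rwa [← hv0]
      · simpa [hv1] using (prefI_cons_iff.1 hu).1.symm
    · simpa [hv1] using hvc
    · omega

theorem IsImage.exists_of_factorI_cons (hf : IsTau f α β) (hv : IsImage f w v) {c : A}
    {u : List A} (hc : c = β ∨ ∃ u', u = α :: u') (h : FactorI v (c :: u)) :
    ∃ m p, w m = c ∧ IsImage f (shift w (m + 1)) (shift v p) ∧ PrefI u (shift v p) := by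
  obtain ⟨k, hk⟩ := h
  obtain ⟨m, p, j, hmp, hj, rfl⟩ := hv.exists_block hf.ne_nil k
  have hk' : PrefI (c :: u) (shift (shift v p) j) := by rw [shift_shift]; exact hk
  obtain ⟨hc', hlen⟩ := hmp.head_eq_of_prefI_shift hf (by simpa using hj) hc hk'
  refine ⟨m, p + (j + 1), by simpa using hc', ?_, ?_⟩
  · simpa [hlen] using hmp.shift_head
  · simpa [add_assoc] using (prefI_cons_iff.1 hk').2

theorem IsImage.lspInf (hf : IsTau f α β) (hv : IsImage f w v) (hw : LSPInf w) : LSPInf v := by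
  classical
  suffices key : ∀ u, FactorI v (α :: u) → FactorI v (β :: u) → PrefI u v by
    intro u x y hxy hx hy
    rcases hf.eq_or_eq x with rfl | rfl <;> rcases hf.eq_or_eq y with rfl | rfl
    exacts [absurd rfl hxy, key u hx hy, key u hy hx, absurd rfl hxy]
  intro u hαu hβu
  obtain ⟨m₁, p₁, hm₁, hv₁, hu₁⟩ := hv.exists_of_factorI_cons hf (Or.inl rfl) hβu
  obtain _ | ⟨d, u⟩ := u
  · exact prefI_nil
  obtain rfl : α = d := (hv₁.apply_zero hf).symm.trans (prefI_cons_iff.1 hu₁).1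
  obtain ⟨m₂, p₂, hm₂, hv₂, hu₂⟩ := hv.exists_of_factorI_cons hf (Or.inr ⟨u, rfl⟩) hαu
  obtain ⟨hdec₁, hu⟩ := hv₁.prefI_decode hf hu₁
  have hdec := hw _ α β hf.ne (factorI_cons_of_prefI_shift hm₂ (hv₂.prefI_decode hf hu₂).1)
    (factorI_cons_of_prefI_shift hm₁ hdec₁)
  exact (hv.prefI_flatMap_append hf hdec).of_isPrefix hu

end Tau

end Words

theorem binary_lsp_preserved {A : Type*} (a b : A) (hab : a ≠ b)
    (hA : ∀ x : A, x = a ∨ x = b) (f : A → List A)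
    (hf : (f a = [a] ∧ f b = [a, b]) ∨ (f a = [b, a] ∧ f b = [b]))
    (w : ℕ → A) (hw : LSPInf w) (v : ℕ → A) (hv : IsImage f w v) :
    LSPInf v := by
  rcases hf with ⟨hfa, hfb⟩ | ⟨hfa, hfb⟩
  · exact hv.lspInf ⟨hab, hA, hfa, hfb⟩ hw
  · exact hv.lspInf ⟨hab.symm, fun x => (hA x).symm, hfb, hfa⟩ hw
end

section
/- Let f be a bLSP morphism of A* and let a, b, c be pairwise distinct letters of A. Then f is LSP (a, b, c)-breaking if and only if the longest common prefix of f(b) and f(c) is strictly longer than the longest common prefix of f(a) and f(b). -/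
/-- `u` is an `(a, b, c, β, γ)`-fragility of `w`: `ua` is a prefix of `w` while
`βub` and `γuc` are factors of `w`. -/
def FragilityAt {A : Type*} (w : ℕ → A) (u : List A) (a b c β γ : A) : Prop :=
  PrefI (u ++ [a]) w ∧ FactorI w (β :: (u ++ [b])) ∧ FactorI w (γ :: (u ++ [c]))

/-- `w` is `(a, b, c)`-fragile. -/
def Fragile {A : Type*} (w : ℕ → A) (a b c : A) : Prop :=
  ∃ β γ, β ≠ γ ∧ ∃ u, FragilityAt w u a b c β γ

/-- `f` is LSP `(a, b, c)`-breaking: the image of every `(a, b, c)`-fragile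
infinite LSP word under `f` is not LSP. -/
def Breaking {A : Type*} (f : A → List A) (a b c : A) : Prop :=
  ∀ w : ℕ → A, LSPInf w → Fragile w a b c → ∀ v, IsImage f w v → ¬ LSPInf v

/-- The longest common prefix of two words. -/
def lcp {A : Type*} [DecidableEq A] : List A → List A → List A
  | [], _ => []
  | _ :: _, [] => []
  | a :: u, b :: v => if a = b then a :: lcp u v else []

/-!
Let `α` be the letter with `f α = [α]`. Every image `f x` starts with `α`, has no other `α`, and
ends with `x`; every nonempty prefix of `f x` is the image of its last letter.

If `|lcp (f a) (f b)| < |lcp (f b) (f c)|`, put `p := lcp (f b) (f c)` and let `u` witness the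
fragility of `w`. Then `β f(u) p` and `γ f(u) p` are factors of `f(w)`, so `f(u) p` is a prefix of
`f(w)`, which begins with `f(u) f(a) α`. As `f(a) α` cannot be a prefix of `f b`, `p` is a prefix
of `f a`, hence of `lcp (f a) (f b)`, which is too short.

Otherwise `(abc)^ω` is LSP and fragile, but its image is LSP. A letter `z ≠ α` of the image has a
single left extension, the `x` with `f z = f x ++ [z]`. A factor that begins with `α` begins at an
image block. So if it has two left extensions, it is a common prefix of the images of `(bca)^ω`
and `(cab)^ω`. These begin with `f b α` and `f c α`, and neither of those is a prefix of the
other. Hence the factor is a prefix of `lcp (f b) (f c)`, which is a prefix of `f a`, and so the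
factor is a prefix of the image.
-/

section InfiniteWords
variable {A : Type*} {p q l m : List A} {v : ℕ → A}

theorem PrefI.mono (h : p <+: q) (hq : PrefI q v) : PrefI p v := fun i hi => by
  rw [h.getElem hi]; exact hq i _

theorem PrefI.prefix_or_prefix (hp : PrefI p v) (hq : PrefI q v) : p <+: q ∨ q <+: p := by
  rcases le_total p.length q.length with h | h
  · exact .inl (List.prefix_iff_getElem.2 ⟨h, fun i hi => by rw [hp i hi, hq i]⟩)
  · exact .inr (List.prefix_iff_getElem.2 ⟨h, fun i hi => by rw [hp i, hq i hi]⟩)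

theorem PrefI.prefix_dropLast_of_not_prefix {u : List A} {v₁ v₂ : ℕ → A}
    (hp : PrefI p v₁) (hq : PrefI q v₂) (hpq : ¬ p <+: q) (hqp : ¬ q <+: p)
    (h₁ : PrefI u v₁) (h₂ : PrefI u v₂) : u <+: p.dropLast := by
  have hup : u <+: p := by
    refine (h₁.prefix_or_prefix hp).resolve_right fun hpu => ?_
    rcases h₂.prefix_or_prefix hq with huq | hqu
    · exact hpq (hpu.trans huq)
    · exact (List.prefix_or_prefix_of_prefix hpu hqu).elim hpq hqp
  have hne : u ≠ p := by
    rintro rfl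
    exact (h₂.prefix_or_prefix hq).elim hpq hqp
  have hlt : u.length < p.length := lt_of_le_of_ne hup.length_le (mt hup.eq_of_length hne)
  rw [List.dropLast_eq_take, List.prefix_take_iff]
  exact ⟨hup, by omega⟩

theorem prefI_append : PrefI (p ++ q) v ↔ PrefI p v ∧ PrefI q (fun n => v (p.length + n)) := by
  refine ⟨fun h => ⟨fun i hi => ?_, fun i hi => ?_⟩, fun ⟨hp, hq⟩ i hi => ?_⟩
  · rw [← h i (by simp; omega), List.getElem_append_left]
  · simp only [← h (p.length + i) (by simp; omega),
      List.getElem_append_right (Nat.le_add_right p.length i), Nat.add_sub_cancel_left]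
  · rcases lt_or_ge i p.length with hip | hip
    · rw [List.getElem_append_left hip, hp]
    · rw [List.getElem_append_right hip, hq]; simp only [Nat.add_sub_cancel' hip]

theorem prefI_iff_eq_map_range : PrefI p v ↔ p = (List.range p.length).map v := by
  refine ⟨fun h => List.ext_getElem (by simp) fun i hi _ => by simp [h i hi], fun h i hi => ?_⟩
  rw [List.getElem_of_eq h]; simp

theorem FactorI.of_infix (h : l <:+: m) (hm : FactorI v m) : FactorI v l := by
  obtain ⟨s, t, rfl⟩ := h
  obtain ⟨k, hk⟩ := hm
  have hk : PrefI (s ++ l ++ t) (fun n => v (k + n)) := hk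
  refine ⟨k + s.length, fun i hi => ?_⟩
  rw [(prefI_append.1 (prefI_append.1 hk).1).2 i hi, Nat.add_assoc]

end InfiniteWords

section Images
variable {A B : Type*} {f : A → List B} {w : ℕ → A} {v v' : ℕ → B}

def imagePrefix (f : A → List B) (w : ℕ → A) (n : ℕ) : List B :=
  ((List.range n).map w).flatMap f

theorem imagePrefix_add (k n : ℕ) :
    imagePrefix f w (k + n) = imagePrefix f w k ++ imagePrefix f (fun i => w (k + i)) n := by
  simp [imagePrefix, List.range_add, List.flatMap_append, Function.comp_def]

theorem imagePrefix_succ (n : ℕ) : imagePrefix f w (n + 1) = imagePrefix f w n ++ f (w n) := by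
  rw [imagePrefix_add]; simp [imagePrefix]

theorem le_length_imagePrefix (hf : ∀ a, f a ≠ []) (n : ℕ) : n ≤ (imagePrefix f w n).length := by
  induction n with
  | zero => simp
  | succ n ih =>
    rw [imagePrefix_succ, List.length_append]
    have := List.length_pos_iff.2 (hf (w n))
    omega

theorem exists_eq_length_imagePrefix_add (hf : ∀ a, f a ≠ []) (j : ℕ) :
    ∃ k o, o < (f (w k)).length ∧ j = (imagePrefix f w k).length + o := by
  induction j with
  | zero => exact ⟨0, 0, List.length_pos_iff.2 (hf _), by simp [imagePrefix]⟩
  | succ j ih =>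
    obtain ⟨k, o, ho, rfl⟩ := ih
    by_cases h : o + 1 < (f (w k)).length
    · exact ⟨k, o + 1, h, by omega⟩
    · refine ⟨k + 1, 0, List.length_pos_iff.2 (hf _), ?_⟩
      rw [imagePrefix_succ, List.length_append]
      omega

theorem exists_isImage (hf : ∀ a, f a ≠ []) (w : ℕ → A) : ∃ v, IsImage f w v := by
  have hlt (n : ℕ) : n < (imagePrefix f w (n + 1)).length := le_length_imagePrefix hf (n + 1)
  refine ⟨fun n => (imagePrefix f w (n + 1))[n]'(hlt n), fun n i hi => ?_⟩
  have hmono {m n : ℕ} (h : m ≤ n) : imagePrefix f w m <+: imagePrefix f w n := by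
    obtain ⟨d, rfl⟩ := Nat.exists_eq_add_of_le h
    rw [imagePrefix_add]
    exact List.prefix_append _ _
  rcases le_total n (i + 1) with h | h
  · exact (hmono h).getElem hi
  · exact ((hmono h).getElem (hlt i)).symm

theorem IsImage.unique (hf : ∀ a, f a ≠ []) (hv : IsImage f w v) (hv' : IsImage f w v') :
    v = v' := by
  funext n
  have hn := le_length_imagePrefix (w := w) hf (n + 1)
  rw [← hv _ n hn, ← hv' _ n hn]

theorem IsImage.shift (hv : IsImage f w v) (k : ℕ) :
    IsImage f (fun n => w (k + n)) (fun n => v ((imagePrefix f w k).length + n)) := fun n => by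
  have h := hv (k + n)
  exact (prefI_append.1 (by rwa [← imagePrefix, imagePrefix_add] at h)).2

theorem IsImage.prefI_flatMap {s : List A} (hv : IsImage f w v) (hs : PrefI s w) :
    PrefI (s.flatMap f) v := by
  rw [prefI_iff_eq_map_range.1 hs]
  exact hv _

theorem IsImage.factorI_flatMap {s : List A} (hv : IsImage f w v) (hs : FactorI w s) :
    FactorI v (s.flatMap f) := by
  obtain ⟨k, hk⟩ := hs
  exact ⟨_, (hv.shift k).prefI_flatMap hk⟩

end Images

section BLSP
variable {A : Type*} {f : A → List A} {α : A}

def IsBLSPWith (f : A → List A) (α : A) : Prop :=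
  f α = [α] ∧ ∀ β, β ≠ α → ∃ γ, f β = f γ ++ [β]

namespace IsBLSPWith

theorem exists_eq_concat (hf : IsBLSPWith f α) (β : A) : ∃ s, f β = s ++ [β] := by
  by_cases hβ : β = α
  · exact ⟨[], by rw [hβ, hf.1]; rfl⟩
  · obtain ⟨γ, hγ⟩ := hf.2 β hβ
    exact ⟨f γ, hγ⟩

theorem exists_eq_cons (hf : IsBLSPWith f α) (β : A) : ∃ t, f β = α :: t ∧ α ∉ t := by
  induction h : (f β).length using Nat.strong_induction_on generalizing β with
  | _ n ih =>
  by_cases hβ : β = α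
  · exact ⟨[], by rw [hβ, hf.1], List.not_mem_nil⟩
  · obtain ⟨γ, hγ⟩ := hf.2 β hβ
    obtain ⟨t, ht, hαt⟩ := ih _ (by rw [← h, hγ]; simp) γ rfl
    exact ⟨t ++ [β], by rw [hγ, ht]; rfl, by simp [hαt, Ne.symm hβ]⟩

theorem ne_nil (hf : IsBLSPWith f α) (β : A) : f β ≠ [] := by
  obtain ⟨t, ht, -⟩ := hf.exists_eq_cons β
  simp [ht]

theorem getElem_eq_iff_eq_zero (hf : IsBLSPWith f α) {β : A} {i : ℕ} (hi : i < (f β).length) :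
    (f β)[i] = α ↔ i = 0 := by
  obtain ⟨t, ht, hαt⟩ := hf.exists_eq_cons β
  simp only [ht] at hi ⊢
  rcases i with _ | i
  · simp
  · simp only [List.getElem_cons_succ, Nat.add_one_ne_zero, iff_false]
    exact fun h => hαt (h ▸ List.getElem_mem _)

theorem injective (hf : IsBLSPWith f α) : Function.Injective f := fun b c h => by
  obtain ⟨s, hs⟩ := hf.exists_eq_concat b
  obtain ⟨t, ht⟩ := hf.exists_eq_concat c
  rw [hs, ht] at h
  simpa using (List.append_inj' h rfl).2

theorem take_add_one_eq (hf : IsBLSPWith f α) (β : A) {i : ℕ} (hi : i < (f β).length) :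
    (f β).take (i + 1) = f ((f β)[i]) := by
  induction h : (f β).length using Nat.strong_induction_on generalizing β i with
  | _ n ih =>
  by_cases hβ : β = α
  · subst hβ
    simp only [hf.1] at hi ⊢
    obtain rfl : i = 0 := by simpa using hi
    simp [hf.1]
  · obtain ⟨γ, hγ⟩ := hf.2 β hβ
    simp only [hγ] at hi ⊢
    rcases lt_or_eq_of_le (Nat.lt_succ_iff.1 (by simpa using hi)) with hi' | rfl
    · rw [List.take_append_of_le_length hi', List.getElem_append_left hi']
      exact ih _ (by rw [← h, hγ]; simp) γ hi' rfl
    · simp [hγ]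

theorem not_append_prefix (hf : IsBLSPWith f α) (b c : A) : ¬ f b ++ [α] <+: f c := by
  obtain ⟨s, hs, -⟩ := hf.exists_eq_cons b
  obtain ⟨t, ht, hαt⟩ := hf.exists_eq_cons c
  rw [hs, ht, List.cons_append, List.cons_prefix_cons]
  exact fun ⟨_, h⟩ => hαt (h.subset (by simp))

theorem not_append_prefix_append (hf : IsBLSPWith f α) {b c : A} (hbc : b ≠ c) :
    ¬ f b ++ [α] <+: f c ++ [α] := by
  rw [List.prefix_concat_iff]
  rintro (h | h)
  · exact hbc (hf.injective (List.append_cancel_right h))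
  · exact hf.not_append_prefix b c h

end IsBLSPWith

end BLSP

section LongestCommonPrefix
variable {A : Type*} [DecidableEq A]

theorem lcp_prefix_left : ∀ s t : List A, lcp s t <+: s
  | [], _ => by simp [lcp]
  | _ :: _, [] => by simp [lcp]
  | a :: u, b :: v => by
    rw [lcp]
    split
    · exact List.cons_prefix_cons.2 ⟨rfl, lcp_prefix_left u v⟩
    · simp

theorem lcp_prefix_right : ∀ s t : List A, lcp s t <+: t
  | [], _ => by simp [lcp]
  | _ :: _, [] => by simp [lcp]
  | a :: u, b :: v => by
    rw [lcp]
    split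
    · subst a
      exact List.cons_prefix_cons.2 ⟨rfl, lcp_prefix_right u v⟩
    · simp

theorem prefix_lcp : ∀ {r s t : List A}, r <+: s → r <+: t → r <+: lcp s t
  | [], _, _, _, _ => List.nil_prefix
  | x :: r, _, _, ⟨s, rfl⟩, ⟨t, rfl⟩ => by
    rw [List.cons_append, List.cons_append, lcp, if_pos rfl]
    exact List.cons_prefix_cons.2
      ⟨rfl, prefix_lcp (List.prefix_append r s) (List.prefix_append r t)⟩

end LongestCommonPrefix

section BLSPImages
variable {A : Type*} {f : A → List A} {α : A} {w : ℕ → A} {v : ℕ → A}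

theorem IsImage.prefI_block (hv : IsImage f w v) (k : ℕ) :
    PrefI (f (w k)) (fun n => v ((imagePrefix f w k).length + n)) := by
  simpa [imagePrefix] using hv.shift k 1

theorem IsImage.getElem_eq (hv : IsImage f w v) {k i : ℕ} (hi : i < (f (w k)).length) :
    (f (w k))[i] = v ((imagePrefix f w k).length + i) :=
  hv.prefI_block k i hi

theorem IsImage.prefI_append_fixed (hf : IsBLSPWith f α) (hv : IsImage f w v) :
    PrefI (f (w 0) ++ [α]) v := by
  have h : PrefI (f (w 0) ++ f (w 1)) v := by simpa [List.range_succ] using hv 2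
  obtain ⟨t, ht, -⟩ := hf.exists_eq_cons (w 1)
  exact h.mono (by simp [ht])

theorem IsImage.eq_append_of_factorI (hf : IsBLSPWith f α) (hv : IsImage f w v) {x z : A}
    (h : FactorI v [x, z]) (hz : z ≠ α) : f z = f x ++ [z] := by
  obtain ⟨k, hk⟩ := h
  obtain ⟨K, o, ho, hko⟩ := exists_eq_length_imagePrefix_add hf.ne_nil (w := w) (k + 1)
  have hzK : (f (w K))[o] = z := by
    rw [hv.getElem_eq ho, ← hko]
    exact (hk 1 (by simp)).symm
  have ho0 : o ≠ 0 := fun h0 => hz (hzK.symm.trans ((hf.getElem_eq_iff_eq_zero ho).2 h0))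
  obtain ⟨o, rfl⟩ : ∃ o', o = o' + 1 := ⟨o - 1, by omega⟩
  have hxK : (f (w K))[o] = x := by
    rw [hv.getElem_eq, show (imagePrefix f w K).length + o = k by omega]
    exact (hk 0 (by simp)).symm
  calc f z = (f (w K)).take (o + 2) := by rw [hf.take_add_one_eq _ ho, hzK]
    _ = (f (w K)).take (o + 1) ++ [(f (w K))[o + 1]] := by
      rw [List.take_add_one, List.getElem?_eq_getElem ho]; rfl
    _ = f x ++ [z] := by rw [hf.take_add_one_eq _ (by omega), hxK, hzK]

theorem IsImage.exists_of_factorI_cons_fixed (hf : IsBLSPWith f α) (hv : IsImage f w v) {x : A}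
    {u : List A} (h : FactorI v (x :: α :: u)) :
    ∃ K v', w K = x ∧ IsImage f (fun n => w (K + 1 + n)) v' ∧ PrefI (α :: u) v' := by
  obtain ⟨k, hk⟩ := h
  obtain ⟨K, o, ho, hko⟩ := exists_eq_length_imagePrefix_add hf.ne_nil (w := w) (k + 1)
  obtain rfl : o = 0 := (hf.getElem_eq_iff_eq_zero ho).1 <| by
    rw [hv.getElem_eq ho, ← hko]
    exact (hk 1 (by simp)).symm
  have hK0 : K ≠ 0 := by
    rintro rfl
    simp [imagePrefix] at hko
  obtain ⟨K, rfl⟩ : ∃ K', K = K' + 1 := ⟨K - 1, by omega⟩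
  refine ⟨K, _, ?_, hv.shift (K + 1), fun i hi => ?_⟩
  · obtain ⟨s, hs⟩ := hf.exists_eq_concat (w K)
    rw [imagePrefix_succ, List.length_append, hs] at hko
    have hlast := hv.getElem_eq (k := K) (i := s.length) (by simp [hs])
    simp only [hs, List.getElem_concat_length] at hlast
    rw [hlast, show (imagePrefix f w K).length + s.length = k by simp at hko; omega]
    exact (hk 0 (by simp)).symm
  · have hi' : i + 1 < (x :: α :: u).length := by simpa using hi
    rw [← List.getElem_cons_succ x _ i hi', hk (i + 1) hi']
    congr 1
    omega

theorem IsImage.prefix_lcp_of_prefI [DecidableEq A] (hf : IsBLSPWith f α) {w₁ w₂ v₁ v₂ : ℕ → A}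
    (hv₁ : IsImage f w₁ v₁) (hv₂ : IsImage f w₂ v₂) (hw : w₁ 0 ≠ w₂ 0) {u : List A}
    (h₁ : PrefI u v₁) (h₂ : PrefI u v₂) : u <+: lcp (f (w₁ 0)) (f (w₂ 0)) := by
  have hp₁ := hv₁.prefI_append_fixed hf
  have hp₂ := hv₂.prefI_append_fixed hf
  have hne₁₂ := hf.not_append_prefix_append hw
  have hne₂₁ := hf.not_append_prefix_append hw.symm
  refine prefix_lcp ?_ ?_
  · simpa using hp₁.prefix_dropLast_of_not_prefix hp₂ hne₁₂ hne₂₁ h₁ h₂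
  · simpa using hp₂.prefix_dropLast_of_not_prefix hp₁ hne₂₁ hne₁₂ h₂ h₁

end BLSPImages

theorem IsBLSPWith.breaking_of_lcp_lt {A : Type*} [DecidableEq A] {f : A → List A} {α : A}
    (hf : IsBLSPWith f α) {a b c : A}
    (hlt : (lcp (f a) (f b)).length < (lcp (f b) (f c)).length) : Breaking f a b c := by
  rintro w - ⟨β, γ, hβγ, u, hpre, hfb, hfc⟩ v hv hlsp
  set p := lcp (f b) (f c)
  have hfactor {δ e : A} (hpe : p <+: f e) (h : FactorI w (δ :: (u ++ [e]))) :
      FactorI v (δ :: (u.flatMap f ++ p)) := by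
    obtain ⟨s, hs⟩ := hf.exists_eq_concat δ
    obtain ⟨t, ht⟩ := hpe
    exact (hv.factorI_flatMap h).of_infix ⟨s, t, by simp [hs, ← ht]⟩
  have hp : PrefI (u.flatMap f ++ p) v :=
    hlsp _ _ _ hβγ (hfactor (lcp_prefix_left _ _) hfb) (hfactor (lcp_prefix_right _ _) hfc)
  have ha : PrefI (u.flatMap f ++ (f a ++ [α])) v := by
    have hw : PrefI (u ++ [a] ++ [w (u.length + 1)]) w :=
      prefI_append.2 ⟨hpre, fun i hi => by simp at hi; subst hi; simp⟩
    obtain ⟨t, ht, -⟩ := hf.exists_eq_cons (w (u.length + 1))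
    exact (hv.prefI_flatMap hw).mono (by simp [ht])
  rcases (prefI_append.1 hp).2.prefix_or_prefix (prefI_append.1 ha).2 with h | h
  · rcases List.prefix_concat_iff.1 h with h | h
    · exact hf.not_append_prefix a b (h ▸ lcp_prefix_left _ _)
    · exact absurd (prefix_lcp h (lcp_prefix_left _ _)).length_le (not_le.2 hlt)
  · exact hf.not_append_prefix a b (h.trans (lcp_prefix_left _ _))

section CyclicWord
variable {A : Type*} {a b c : A}

def cyclicWord (a b c : A) (n : ℕ) : A :=
  if n % 3 = 0 then a else if n % 3 = 1 then b else c

theorem cyclicWord_shift (a b c : A) (K : ℕ) :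
    (cyclicWord a b c K = c ∧ (fun n => cyclicWord a b c (K + 1 + n)) = cyclicWord a b c) ∨
    (cyclicWord a b c K = a ∧ (fun n => cyclicWord a b c (K + 1 + n)) = cyclicWord b c a) ∨
    (cyclicWord a b c K = b ∧ (fun n => cyclicWord a b c (K + 1 + n)) = cyclicWord c a b) := by
  have hK : K % 3 = 0 ∨ K % 3 = 1 ∨ K % 3 = 2 := by omega
  rcases hK with hK | hK | hK
  · refine Or.inr (Or.inl ⟨?_, funext fun n => ?_⟩) <;> simp only [cyclicWord] <;>
      split_ifs <;> first | rfl | omega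
  · refine Or.inr (Or.inr ⟨?_, funext fun n => ?_⟩) <;> simp only [cyclicWord] <;>
      split_ifs <;> first | rfl | omega
  · refine Or.inl ⟨?_, funext fun n => ?_⟩ <;> simp only [cyclicWord] <;>
      split_ifs <;> first | rfl | omega

theorem cyclicWord_eq_of_succ_eq (hab : a ≠ b) (hbc : b ≠ c) (hac : a ≠ c) {k k' : ℕ}
    (h : cyclicWord a b c (k + 1) = cyclicWord a b c (k' + 1)) :
    cyclicWord a b c k = cyclicWord a b c k' := by
  simp only [cyclicWord] at h ⊢
  split_ifs at h ⊢ <;> first | rfl | omega | simp_all [eq_comm]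

theorem lspInf_cyclicWord (hab : a ≠ b) (hbc : b ≠ c) (hac : a ≠ c) :
    LSPInf (cyclicWord a b c) := by
  rintro (_ | ⟨z, u⟩) x y hxy ⟨k, hk⟩ ⟨k', hk'⟩
  · exact fun i hi => absurd hi (Nat.not_lt_zero _)
  have hx : x = cyclicWord a b c k := hk 0 (by simp)
  have hy : y = cyclicWord a b c k' := hk' 0 (by simp)
  have hz : z = cyclicWord a b c (k + 1) := hk 1 (by simp)
  have hz' : z = cyclicWord a b c (k' + 1) := hk' 1 (by simp)
  exact absurd (hx.trans ((cyclicWord_eq_of_succ_eq hab hbc hac (hz.symm.trans hz')).trans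
    hy.symm)) hxy

theorem fragile_cyclicWord (hab : a ≠ b) : Fragile (cyclicWord a b c) a b c := by
  refine ⟨a, b, hab, [], fun i hi => ?_, ⟨0, fun i hi => ?_⟩, ⟨1, fun i hi => ?_⟩⟩ <;>
    simp only [List.nil_append, List.length_cons, List.length_nil] at hi <;>
    interval_cases i <;> simp [cyclicWord]

end CyclicWord

theorem IsBLSPWith.lspInf_of_isImage_cyclicWord {A : Type*} [DecidableEq A] {f : A → List A}
    {α a b c : A} (hf : IsBLSPWith f α) (hbc : b ≠ c)
    (hle : (lcp (f b) (f c)).length ≤ (lcp (f a) (f b)).length) {v : ℕ → A}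
    (hv : IsImage f (cyclicWord a b c) v) : LSPInf v := by
  have hprefI {v₁ v₂ : ℕ → A} {u : List A} (hv₁ : IsImage f (cyclicWord b c a) v₁)
      (hv₂ : IsImage f (cyclicWord c a b) v₂) (hu₁ : PrefI u v₁) (hu₂ : PrefI u v₂) :
      PrefI u v := by
    have hu : u <+: lcp (f b) (f c) := by
      simpa [cyclicWord] using hv₁.prefix_lcp_of_prefI hf hv₂ (by simpa [cyclicWord]) hu₁ hu₂
    have hlcp : lcp (f b) (f c) <+: lcp (f a) (f b) :=
      List.prefix_of_prefix_length_le (lcp_prefix_left _ _) (lcp_prefix_right _ _) hle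
    have ha : PrefI (f a) v := by simpa [cyclicWord, imagePrefix] using hv.prefI_block 0
    exact ha.mono ((hu.trans hlcp).trans (lcp_prefix_left _ _))
  rintro (_ | ⟨z, u⟩) x y hxy hx hy
  · exact fun i hi => absurd hi (Nat.not_lt_zero _)
  by_cases hz : z = α
  · subst hz
    obtain ⟨K, v₁, hxK, hv₁, hu₁⟩ := hv.exists_of_factorI_cons_fixed hf hx
    obtain ⟨K', v₂, hyK', hv₂, hu₂⟩ := hv.exists_of_factorI_cons_fixed hf hy
    rcases cyclicWord_shift a b c K with ⟨hK, hs⟩ | ⟨hK, hs⟩ | ⟨hK, hs⟩ <;> rw [hs] at hv₁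
    · exact hv₁.unique hf.ne_nil hv ▸ hu₁
    all_goals
      rcases cyclicWord_shift a b c K' with ⟨hK', hs'⟩ | ⟨hK', hs'⟩ | ⟨hK', hs'⟩ <;>
        rw [hs'] at hv₂
      · exact hv₂.unique hf.ne_nil hv ▸ hu₂
      all_goals first
        | exact absurd (hxK.symm.trans (hK.trans (hK'.symm.trans hyK'))) hxy
        | exact hprefI hv₁ hv₂ hu₁ hu₂
        | exact hprefI hv₂ hv₁ hu₂ hu₁
  · have hx' := hv.eq_append_of_factorI hf (hx.of_infix (List.prefix_append [x, z] u).isInfix) hz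
    have hy' := hv.eq_append_of_factorI hf (hy.of_infix (List.prefix_append [y, z] u).isInfix) hz
    exact absurd (hf.injective (List.append_cancel_right (hx'.symm.trans hy'))) hxy

theorem breaking_characterization {A : Type*} [DecidableEq A] (f : A → List A)
    (hf : IsBLSP f) (a b c : A) (hab : a ≠ b) (hbc : b ≠ c) (hac : a ≠ c) :
    Breaking f a b c ↔ (lcp (f a) (f b)).length < (lcp (f b) (f c)).length := by
  obtain ⟨α, hf⟩ : ∃ α, IsBLSPWith f α := hf
  refine ⟨fun hbreak => ?_, hf.breaking_of_lcp_lt⟩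
  by_contra! hle
  obtain ⟨v, hv⟩ := exists_isImage hf.ne_nil (cyclicWord a b c)
  exact hbreak _ (lspInf_cyclicWord hab hbc hac) (fragile_cyclicWord hab) v hv
    (hf.lspInf_of_isImage_cyclicWord hbc hle hv)
end
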